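/- arXiv:2509.05501 — 5 statements merged into one kernel-verified Lean document; each statement's English description precedes it below -/
import Mathlib

section
/- The set of rational numbers of the form (4a + 2b)/(5a + 2b), where a ranges over positive integers and b over nonnegative integers, is exactly the set of rationals in the interval [4/5, 1). -/
/-!
For `a > 0` the value `(4a + 2b)/(5a + 2b)` lies in `[4/5, 1)` by clearing denominators.
Conversely, write `x = n/d` with `4d ≤ 5n` and `n < d`; the choice `a = 2(d - n)`,
`b = 5n - 4d` gives `4a + 2b = 2n` and `5a + 2b = 2d`.
-/

lemma Rat.exists_eq_natCast_div_natCast_of_nonneg {x : ℚ} (hx : 0 ≤ x) :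
    ∃ n d : ℕ, 0 < d ∧ x = n / d := by
  lift x to ℚ≥0 using hx
  refine ⟨x.num, x.den, x.den_pos, ?_⟩
  rw [← NNRat.cast_natCast, ← NNRat.cast_natCast x.den, ← NNRat.cast_div, NNRat.num_div_den]

section

variable {K : Type*} [Field K] [LinearOrder K] [IsStrictOrderedRing K]

lemma four_fifths_le_four_add_two_div_five_add_two (a b : ℕ) (ha : 0 < a) :
    (4 / 5 : K) ≤ ((4 * a + 2 * b : ℕ) : K) / ((5 * a + 2 * b : ℕ) : K) := by
  rw [div_le_div_iff₀ (by norm_num) (by positivity)]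
  exact_mod_cast (by omega : 4 * (5 * a + 2 * b) ≤ (4 * a + 2 * b) * 5)

lemma four_add_two_div_five_add_two_lt_one (a b : ℕ) (ha : 0 < a) :
    ((4 * a + 2 * b : ℕ) : K) / ((5 * a + 2 * b : ℕ) : K) < 1 := by
  rw [div_lt_one (by positivity)]
  exact_mod_cast (by omega : 4 * a + 2 * b < 5 * a + 2 * b)

lemma exists_four_add_two_div_five_add_two_eq {n d : ℕ} (hle : 4 * d ≤ 5 * n) (hlt : n < d) :
    ∃ a b : ℕ, 0 < a ∧ (n / d : K) = ((4 * a + 2 * b : ℕ) : K) / ((5 * a + 2 * b : ℕ) : K) := by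
  refine ⟨2 * (d - n), 5 * n - 4 * d, by omega, ?_⟩
  rw [show 4 * (2 * (d - n)) + 2 * (5 * n - 4 * d) = 2 * n by omega,
    show 5 * (2 * (d - n)) + 2 * (5 * n - 4 * d) = 2 * d by omega]
  push_cast
  rw [mul_div_mul_left _ _ two_ne_zero]

end

theorem stmt_2 :
    {x : ℚ | ∃ a b : ℕ, 0 < a ∧ x = ((4 * a + 2 * b : ℕ) : ℚ) / ((5 * a + 2 * b : ℕ) : ℚ)} =
      {x : ℚ | 4 / 5 ≤ x ∧ x < 1} := by
  ext x
  constructor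
  · rintro ⟨a, b, ha, rfl⟩
    exact ⟨four_fifths_le_four_add_two_div_five_add_two a b ha, four_add_two_div_five_add_two_lt_one a b ha⟩
  · rintro ⟨hge, hlt⟩
    obtain ⟨n, d, hd, rfl⟩ :=
      Rat.exists_eq_natCast_div_natCast_of_nonneg (by linarith : (0 : ℚ) ≤ x)
    have hd' : (0 : ℚ) < d := by exact_mod_cast hd
    rw [div_le_div_iff₀ (by norm_num) hd'] at hge
    rw [div_lt_one hd'] at hlt
    exact exists_four_add_two_div_five_add_two_eq (by exact_mod_cast (by linarith : (4 * d : ℚ) ≤ 5 * n))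
      (by exact_mod_cast hlt)
end

section
/- The set of rational numbers of the form (9a + 4b)/(10a + 4b), where a ranges over positive integers and b over nonnegative integers, is exactly the set of rationals in the interval [9/10, 1). -/
/-! Clearing denominators shows every such quotient lies in `[9/10, 1)`. Conversely, for
`9/10 ≤ p/q < 1` the choice `a = 4(q - p) > 0`, `b = 10p - 9q ≥ 0` gives
`9a + 4b = 4p` and `10a + 4b = 4q`. -/

section

variable {K : Type*} [Field K] [LinearOrder K] [IsStrictOrderedRing K] {a b : K}

theorem nine_div_ten_le_nine_add_div_ten_add (ha : 0 < a) (hb : 0 ≤ b) :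
    9 / 10 ≤ (9 * a + 4 * b) / (10 * a + 4 * b) := by
  rw [div_le_div_iff₀ (by norm_num) (by positivity)]
  linarith

theorem nine_add_div_ten_add_lt_one (ha : 0 < a) (hb : 0 ≤ b) :
    (9 * a + 4 * b) / (10 * a + 4 * b) < 1 := by
  rw [div_lt_one (by positivity)]
  linarith

end

theorem Rat.exists_nat_div_of_nonneg {x : ℚ} (hx : 0 ≤ x) :
    ∃ p q : ℕ, 0 < q ∧ x = (p : ℚ) / q :=
  ⟨x.num.natAbs, x.den, x.pos, by
    rw [Nat.cast_natAbs, Int.cast_abs, abs_of_nonneg (Int.cast_nonneg (Rat.num_nonneg.mpr hx)),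
      Rat.num_div_den]⟩

theorem exists_nat_div_eq_div {p q : ℕ} (h₁ : 9 * q ≤ 10 * p) (h₂ : p < q) :
    ∃ a b : ℕ, 0 < a ∧
      (p : ℚ) / q = ((9 * a + 4 * b : ℕ) : ℚ) / ((10 * a + 4 * b : ℕ) : ℚ) := by
  refine ⟨4 * (q - p), 10 * p - 9 * q, by omega, ?_⟩
  have hnum : 9 * (4 * (q - p)) + 4 * (10 * p - 9 * q) = 4 * p := by omega
  have hden : 10 * (4 * (q - p)) + 4 * (10 * p - 9 * q) = 4 * q := by omega
  rw [hnum, hden]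
  push_cast
  rw [mul_div_mul_left _ _ four_ne_zero]

theorem stmt_3 :
    {x : ℚ | ∃ a b : ℕ, 0 < a ∧ x = ((9 * a + 4 * b : ℕ) : ℚ) / ((10 * a + 4 * b : ℕ) : ℚ)} =
      {x : ℚ | 9 / 10 ≤ x ∧ x < 1} := by
  ext x
  constructor
  · rintro ⟨a, b, ha, rfl⟩
    have ha' : (0 : ℚ) < a := by exact_mod_cast ha
    push_cast
    exact ⟨nine_div_ten_le_nine_add_div_ten_add ha' b.cast_nonneg,
      nine_add_div_ten_add_lt_one ha' b.cast_nonneg⟩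
  · rintro ⟨h₁, h₂⟩
    obtain ⟨p, q, hq, rfl⟩ := Rat.exists_nat_div_of_nonneg (by linarith)
    have hq' : (0 : ℚ) < q := by exact_mod_cast hq
    rw [div_le_div_iff₀ (by norm_num) hq'] at h₁
    rw [div_lt_one hq'] at h₂
    exact exists_nat_div_eq_div (by exact_mod_cast h₁.trans_eq (mul_comm _ _))
      (by exact_mod_cast h₂)
end

section
/- Let G be a cubic graph and M_1, M_2, M_3 perfect matchings. With S_i the set of edges covered by exactly i matchings: both S_0 and S_2 are matchings of G whenever S_3 is empty, and the subgraph induced by S_0 ∪ S_2 has every vertex of degree 0 or 2. -/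
/-- A set of edges is a matching if no two distinct edges share a vertex. -/
def EdgeSetMatching {V : Type*} (M : Set (Sym2 V)) : Prop :=
  ∀ e ∈ M, ∀ f ∈ M, e ≠ f → ∀ v : V, v ∈ e → v ∉ f

/-- A perfect matching of a graph, as a set of edges: each vertex is
incident with exactly one edge of the set. -/
def IsPerfectMatchingSet {V : Type*} (G : SimpleGraph V) (M : Set (Sym2 V)) : Prop :=
  M ⊆ G.edgeSet ∧ ∀ v : V, ∃! e, e ∈ M ∧ v ∈ e

/-- The number of the three matchings containing a given edge. -/
noncomputable def coverCount {V : Type*} (M : Fin 3 → Set (Sym2 V)) (e : Sym2 V) : ℕ :=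
  {i : Fin 3 | e ∈ M i}.ncard

/-!
At a vertex of a cubic graph the three perfect matchings contribute three incidences in total,
spread over the three incident edges, each of which takes at most two of them when no edge lies
in all three matchings. The only distributions are `1 + 1 + 1` and `0 + 1 + 2`: two incident
edges with equal cover count both have count `1`, and the incident edges of count `0` or `2`
number either none or two.
-/

open Finset SimpleGraph

section ThreeTerms

variable {α : Type*} [DecidableEq α] {s : Finset α} {c : α → ℕ}

lemma eq_one_of_eq_of_sum_eq_three (hs : #s = 3) (hsum : ∑ x ∈ s, c x = 3)
    (hle : ∀ x ∈ s, c x ≤ 2) {e f : α} (he : e ∈ s) (hf : f ∈ s) (hef : e ≠ f)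
    (hc : c e = c f) : c e = 1 := by
  obtain ⟨a, b, d, hab, had, hbd, rfl⟩ := card_eq_three.1 hs
  rw [sum_insert (by simp [hab, had]), sum_insert (by simp [hbd]), sum_singleton] at hsum
  have := hle a (by simp)
  have := hle b (by simp)
  have := hle d (by simp)
  simp only [mem_insert, mem_singleton] at he hf
  rcases he with rfl | rfl | rfl <;> rcases hf with rfl | rfl | rfl <;>
    first | exact absurd rfl hef | omega

lemma card_filter_eq_zero_or_two_of_sum_eq_three (hs : #s = 3) (hsum : ∑ x ∈ s, c x = 3)
    (hle : ∀ x ∈ s, c x ≤ 2) :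
    #{x ∈ s | c x = 0 ∨ c x = 2} = 0 ∨ #{x ∈ s | c x = 0 ∨ c x = 2} = 2 := by
  obtain ⟨a, b, d, hab, had, hbd, rfl⟩ := card_eq_three.1 hs
  rw [sum_insert (by simp [hab, had]), sum_insert (by simp [hbd]), sum_singleton] at hsum
  have := hle a (by simp)
  have := hle b (by simp)
  have := hle d (by simp)
  rw [card_filter, sum_insert (by simp [hab, had]), sum_insert (by simp [hbd]), sum_singleton]
  split_ifs <;> omega

end ThreeTerms

section CoverCount

variable {V : Type*} {G : SimpleGraph V} {M : Fin 3 → Set (Sym2 V)}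

lemma coverCount_le_three (M : Fin 3 → Set (Sym2 V)) (e : Sym2 V) : coverCount M e ≤ 3 :=
  (Set.ncard_le_card _).trans_eq (Nat.card_eq_fintype_card.trans (Fintype.card_fin 3))

lemma coverCount_eq_card [∀ i, DecidablePred (· ∈ M i)] (e : Sym2 V) :
    coverCount M e = #{i | e ∈ M i} := by
  rw [coverCount, ← Set.ncard_coe_finset, coe_filter_univ]

lemma IsPerfectMatchingSet.card_filter_incidenceFinset [DecidableEq V] {N : Set (Sym2 V)}
    [DecidablePred (· ∈ N)] (hN : IsPerfectMatchingSet G N) (v : V)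
    [Fintype (G.neighborSet v)] : #{e ∈ G.incidenceFinset v | e ∈ N} = 1 := by
  obtain ⟨e₀, ⟨he₀N, hve₀⟩, huniq⟩ := hN.2 v
  refine card_eq_one.2 ⟨e₀, ext fun e => ?_⟩
  simp only [mem_filter, mem_incidenceFinset, incidenceSet, Set.mem_ofPred, mem_singleton]
  constructor
  · rintro ⟨⟨-, hve⟩, heN⟩
    exact huniq e ⟨heN, hve⟩
  · rintro rfl
    exact ⟨⟨hN.1 he₀N, hve₀⟩, he₀N⟩

lemma sum_coverCount_incidenceFinset [DecidableEq V] (hM : ∀ i, IsPerfectMatchingSet G (M i))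
    (v : V) [Fintype (G.neighborSet v)] :
    ∑ e ∈ G.incidenceFinset v, coverCount M e = 3 := by
  classical
  calc ∑ e ∈ G.incidenceFinset v, coverCount M e
      = ∑ e ∈ G.incidenceFinset v, #{i | e ∈ M i} := sum_congr rfl fun e _ => coverCount_eq_card e
    _ = ∑ i, #{e ∈ G.incidenceFinset v | e ∈ M i} :=
        sum_card_bipartiteAbove_eq_sum_card_bipartiteBelow (r := fun e i => e ∈ M i)
    _ = 3 := by simp [(hM _).card_filter_incidenceFinset]

end CoverCount

theorem stmt_10 {V : Type*} [Fintype V] (G : SimpleGraph V) [DecidableRel G.Adj]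
    (hcubic : ∀ v : V, G.degree v = 3)
    (M : Fin 3 → Set (Sym2 V)) (hM : ∀ i, IsPerfectMatchingSet G (M i))
    (hS3 : ∀ e ∈ G.edgeSet, coverCount M e ≠ 3) :
    EdgeSetMatching {e ∈ G.edgeSet | coverCount M e = 0} ∧
    EdgeSetMatching {e ∈ G.edgeSet | coverCount M e = 2} ∧
    (∀ v : V, {e ∈ G.edgeSet | v ∈ e ∧ (coverCount M e = 0 ∨ coverCount M e = 2)}.ncard = 0 ∨
      {e ∈ G.edgeSet | v ∈ e ∧ (coverCount M e = 0 ∨ coverCount M e = 2)}.ncard = 2) := by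
  classical
  have hcard v : #(G.incidenceFinset v) = 3 := by rw [card_incidenceFinset_eq_degree, hcubic]
  have hsum := sum_coverCount_incidenceFinset hM
  have hle v : ∀ e ∈ G.incidenceFinset v, coverCount M e ≤ 2 := fun e he => by
    have := hS3 e (G.incidenceSet_subset v ((G.mem_incidenceFinset v e).1 he))
    have := coverCount_le_three M e
    omega
  have hinc {v e} (he : e ∈ G.edgeSet) (hve : v ∈ e) : e ∈ G.incidenceFinset v :=
    (G.mem_incidenceFinset v e).2 ⟨he, hve⟩
  have hequal {e f v} (he : e ∈ G.edgeSet) (hf : f ∈ G.edgeSet) (hef : e ≠ f) (hve : v ∈ e)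
      (hvf : v ∈ f) (hc : coverCount M e = coverCount M f) : coverCount M e = 1 :=
    eq_one_of_eq_of_sum_eq_three (hcard v) (hsum v) (hle v) (hinc he hve) (hinc hf hvf) hef hc
  refine ⟨?_, ?_, fun v => ?_⟩
  · rintro e ⟨he, he0⟩ f ⟨hf, hf0⟩ hef v hve hvf
    have := hequal he hf hef hve hvf (he0.trans hf0.symm)
    omega
  · rintro e ⟨he, he2⟩ f ⟨hf, hf2⟩ hef v hve hvf
    have := hequal he hf hef hve hvf (he2.trans hf2.symm)
    omega
  · have hset : {e ∈ G.edgeSet | v ∈ e ∧ (coverCount M e = 0 ∨ coverCount M e = 2)} =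
        ↑{e ∈ G.incidenceFinset v | coverCount M e = 0 ∨ coverCount M e = 2} := by
      ext e
      simp [mem_incidenceFinset, incidenceSet, and_assoc]
    rw [hset, Set.ncard_coe_finset]
    exact card_filter_eq_zero_or_two_of_sum_eq_three (hcard v) (hsum v) (hle v)
end

section
/- In the Petersen graph, the union of any three perfect matchings covers at most 12 of the 15 edges; equivalently, at least 3 edges remain uncovered. Moreover, there exist three perfect matchings covering exactly 12 edges. -/
/-- The Petersen graph as the Kneser graph K(5,2): vertices are the 2-element
subsets of a 5-element set, adjacent when disjoint. -/
def petersen : SimpleGraph {s : Finset (Fin 5) // s.card = 2} where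
  Adj a b := Disjoint a.1 b.1
  symm := ⟨fun a b h => h.symm⟩
  loopless := ⟨fun a h => by
    have := h.eq_bot
    simp only [disjoint_self] at h
    have : a.1.card = 0 := by rw [h]; rfl
    omega⟩

/-!
The four vertices containing `0` are pairwise intersecting, hence pairwise non-adjacent, so the
six vertices avoiding `0` form a vertex cover. A perfect matching is therefore the set of edges
joining these six vertices to their partners, and running through the `3 ^ 6` choices of
partners leaves exactly six perfect matchings. Any two of them share exactly one edge and no edge
lies in three of them, so three distinct perfect matchings cover exactly `15 - 3 = 12` edges.
-/

open Finset

namespace IsPerfectMatchingSet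

variable {V : Type*} {G : SimpleGraph V} {M : Set (Sym2 V)}

theorem eq_of_mem (hM : IsPerfectMatchingSet G M) {v : V} {e f : Sym2 V}
    (he : e ∈ M) (hve : v ∈ e) (hf : f ∈ M) (hvf : v ∈ f) : e = f :=
  (hM.2 v).unique ⟨he, hve⟩ ⟨hf, hvf⟩

theorem exists_adj_mk_mem (hM : IsPerfectMatchingSet G M) (v : V) :
    ∃ w, G.Adj v w ∧ s(v, w) ∈ M := by
  obtain ⟨e, ⟨heM, hve⟩, -⟩ := hM.2 v
  obtain ⟨w, rfl⟩ := Sym2.mem_iff_exists.1 hve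
  exact ⟨w, hM.1 heM, heM⟩

theorem eq_image_of_isVertexCover (hM : IsPerfectMatchingSet G M) {W : Set V}
    (hW : G.IsVertexCover W) : ∃ p : V → V, (∀ v, G.Adj v (p v)) ∧ M = (fun w ↦ s(w, p w)) '' W := by
  choose p hadj hmem using hM.exists_adj_mk_mem
  refine ⟨p, hadj, subset_antisymm ?_ ?_⟩
  · intro e he
    induction e using Sym2.ind with
    | h u w =>
      rcases hW (hM.1 he) with hu | hw
      · exact ⟨u, hu, hM.eq_of_mem (hmem u) (Sym2.mem_mk_left _ _) he (Sym2.mem_mk_left _ _)⟩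
      · exact ⟨w, hw, hM.eq_of_mem (hmem w) (Sym2.mem_mk_left _ _) he (Sym2.mem_mk_right _ _)⟩
  · rintro _ ⟨w, -, rfl⟩
    exact hmem w

end IsPerfectMatchingSet

theorem isPerfectMatchingSet_coe_iff {V : Type*} [DecidableEq V] {G : SimpleGraph V}
    {F : Finset (Sym2 V)} :
    IsPerfectMatchingSet G F ↔ (∀ e ∈ F, e ∈ G.edgeSet) ∧ ∀ v, #{e ∈ F | v ∈ e} = 1 := by
  simp only [IsPerfectMatchingSet, Set.subset_def, mem_coe, card_eq_one_iff_existsUnique,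
    mem_filter]

abbrev PetersenVertex := {s : Finset (Fin 5) // s.card = 2}

instance : DecidableRel petersen.Adj := fun a b ↦ inferInstanceAs (Decidable (Disjoint a.1 b.1))

def vtx (i j : Fin 5) (h : i ≠ j := by decide) : PetersenVertex := ⟨{i, j}, card_pair h⟩

def petersenCover : Finset PetersenVertex := {v | 0 ∉ v.1}

theorem petersen_isVertexCover : petersen.IsVertexCover petersenCover := by
  intro v w hvw
  by_contra! h
  simp only [petersenCover, coe_filter, mem_univ, true_and, Set.mem_ofPred_eq, not_not] at h
  exact disjoint_left.1 hvw h.1 h.2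

theorem petersenCover_eq :
    petersenCover = {vtx 1 2, vtx 1 3, vtx 1 4, vtx 2 3, vtx 2 4, vtx 3 4} := by
  decide

def petersenMatching : Fin 6 → Finset (Sym2 PetersenVertex) :=
  ![{s(vtx 0 1, vtx 2 3), s(vtx 0 2, vtx 1 4), s(vtx 0 3, vtx 2 4), s(vtx 0 4, vtx 1 3),
      s(vtx 1 2, vtx 3 4)},
    {s(vtx 0 1, vtx 2 3), s(vtx 0 2, vtx 3 4), s(vtx 0 3, vtx 1 4), s(vtx 0 4, vtx 1 2),
      s(vtx 1 3, vtx 2 4)},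
    {s(vtx 0 1, vtx 2 4), s(vtx 0 2, vtx 1 3), s(vtx 0 3, vtx 1 4), s(vtx 0 4, vtx 2 3),
      s(vtx 1 2, vtx 3 4)},
    {s(vtx 0 1, vtx 2 4), s(vtx 0 2, vtx 3 4), s(vtx 0 3, vtx 1 2), s(vtx 0 4, vtx 1 3),
      s(vtx 1 4, vtx 2 3)},
    {s(vtx 0 1, vtx 3 4), s(vtx 0 2, vtx 1 3), s(vtx 0 3, vtx 2 4), s(vtx 0 4, vtx 1 2),
      s(vtx 1 4, vtx 2 3)},
    {s(vtx 0 1, vtx 3 4), s(vtx 0 2, vtx 1 4), s(vtx 0 3, vtx 1 2), s(vtx 0 4, vtx 2 3),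
      s(vtx 1 3, vtx 2 4)}]

theorem isPerfectMatchingSet_petersenMatching (i : Fin 6) :
    IsPerfectMatchingSet petersen (petersenMatching i) :=
  isPerfectMatchingSet_coe_iff.2 (by revert i; decide)

theorem exists_eq_petersenMatching_of_partners :
    ∀ a, petersen.Adj (vtx 1 2) a → ∀ b, petersen.Adj (vtx 1 3) b →
    ∀ c, petersen.Adj (vtx 1 4) c → ∀ d, petersen.Adj (vtx 2 3) d →
    ∀ e, petersen.Adj (vtx 2 4) e → ∀ f, petersen.Adj (vtx 3 4) f →
    let F : Finset (Sym2 PetersenVertex) :=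
      {s(vtx 1 2, a), s(vtx 1 3, b), s(vtx 1 4, c), s(vtx 2 3, d), s(vtx 2 4, e), s(vtx 3 4, f)}
    (∀ v, #{x ∈ F | v ∈ x} = 1) → ∃ i, F = petersenMatching i := by
  decide

theorem isPerfectMatchingSet_petersen_iff {M : Set (Sym2 PetersenVertex)} :
    IsPerfectMatchingSet petersen M ↔ ∃ i, M = petersenMatching i := by
  refine ⟨fun hM ↦ ?_, ?_⟩
  · obtain ⟨p, hp, rfl⟩ := hM.eq_image_of_isVertexCover petersen_isVertexCover
    rw [← coe_image, petersenCover_eq] at hM ⊢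
    simp only [image_insert, image_singleton] at hM ⊢
    obtain ⟨i, hi⟩ := exists_eq_petersenMatching_of_partners _ (hp _) _ (hp _) _ (hp _) _ (hp _)
      _ (hp _) _ (hp _) (isPerfectMatchingSet_coe_iff.1 hM).2
    exact ⟨i, congrArg _ hi⟩
  · rintro ⟨i, rfl⟩
    exact isPerfectMatchingSet_petersenMatching i

theorem card_union_petersenMatching_le (i j k : Fin 6) :
    #(petersenMatching i ∪ petersenMatching j ∪ petersenMatching k) ≤ 12 := by
  revert i j k
  decide

theorem stmt_12 :
    (∀ M₁ M₂ M₃ : Set (Sym2 {s : Finset (Fin 5) // s.card = 2}),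
      IsPerfectMatchingSet petersen M₁ → IsPerfectMatchingSet petersen M₂ →
      IsPerfectMatchingSet petersen M₃ → (M₁ ∪ M₂ ∪ M₃).ncard ≤ 12) ∧
    (∃ M₁ M₂ M₃ : Set (Sym2 {s : Finset (Fin 5) // s.card = 2}),
      IsPerfectMatchingSet petersen M₁ ∧ IsPerfectMatchingSet petersen M₂ ∧
      IsPerfectMatchingSet petersen M₃ ∧ (M₁ ∪ M₂ ∪ M₃).ncard = 12) := by
  refine ⟨fun M₁ M₂ M₃ h₁ h₂ h₃ ↦ ?_, ?_⟩
  · obtain ⟨i, rfl⟩ := isPerfectMatchingSet_petersen_iff.1 h₁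
    obtain ⟨j, rfl⟩ := isPerfectMatchingSet_petersen_iff.1 h₂
    obtain ⟨k, rfl⟩ := isPerfectMatchingSet_petersen_iff.1 h₃
    rw [← coe_union, ← coe_union, Set.ncard_coe_finset]
    exact card_union_petersenMatching_le i j k
  · refine ⟨_, _, _, isPerfectMatchingSet_petersenMatching 0,
      isPerfectMatchingSet_petersenMatching 1, isPerfectMatchingSet_petersenMatching 2, ?_⟩
    rw [← coe_union, ← coe_union, Set.ncard_coe_finset]
    decide
end

section
/- The Petersen graph is not 3-edge-colorable: its edge set cannot be partitioned into three perfect matchings. -/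
/-!
Sort the ten vertices `{a, b}` of the Kneser graph into the consecutive pairs `{a, a + 1}` and the
pairs `{a + 2, a + 4}` (indices in `Fin 5`). The consecutive pairs form a pentagon `a ~ a + 2`,
the others a pentagon `a ~ a + 1`, and `{a, a + 1} ~ {a + 2, a + 4}` are the five spokes.
Three perfect matchings covering the edges colour the line graph properly with three colours.
In such a colouring the spoke at `a` carries the colour missing at both of its ends, so the two
pentagon edges at one end use the same two colours as the two at the other end; a finite check
over the colourings of the two pentagons shows that this is impossible.
-/

open SimpleGraph

section MatchingCover

variable {V ι : Type*} {G : SimpleGraph V}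

theorem IsPerfectMatchingSet.subsingleton_incident {M : Set (Sym2 V)}
    (hM : IsPerfectMatchingSet G M) (v : V) : {e | e ∈ M ∧ v ∈ e}.Subsingleton :=
  fun _ h₁ _ h₂ => (hM.2 v).unique h₁ h₂

theorem nonempty_lineGraph_coloring_of_matching_cover (M : ι → Set (Sym2 V))
    (hM : ∀ i v, {e | e ∈ M i ∧ v ∈ e}.Subsingleton) (hcover : G.edgeSet ⊆ ⋃ i, M i) :
    Nonempty (G.lineGraph.Coloring ι) := by
  choose color hcolor using fun e : G.edgeSet => Set.mem_iUnion.1 (hcover e.2)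
  refine ⟨Coloring.mk color fun {e₁ e₂} hadj hsame => ?_⟩
  obtain ⟨hne, v, hv₁, hv₂⟩ := lineGraph_adj_iff_exists.1 hadj
  exact hne <| Subtype.ext <| hM _ v ⟨hcolor e₁, hv₁⟩ ⟨hsame ▸ hcolor e₂, hv₂⟩

end MatchingCover

instance inst_s14 : DecidableRel petersen.Adj := fun a b => inferInstanceAs (Decidable (Disjoint a.1 b.1))

namespace Petersen

def consecutivePair (a : Fin 5) : {s : Finset (Fin 5) // s.card = 2} :=
  ⟨{a, a + 1}, Finset.card_pair (by simp)⟩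

def skipPair (a : Fin 5) : {s : Finset (Fin 5) // s.card = 2} :=
  ⟨{a + 2, a + 4}, Finset.card_pair (by simp)⟩

def outerEdge (a : Fin 5) : petersen.edgeSet :=
  ⟨s(consecutivePair a, consecutivePair (a + 2)), by revert a; decide⟩

def innerEdge (a : Fin 5) : petersen.edgeSet :=
  ⟨s(skipPair a, skipPair (a + 1)), by revert a; decide⟩

def spoke (a : Fin 5) : petersen.edgeSet :=
  ⟨s(consecutivePair a, skipPair a), by revert a; decide⟩

theorem lineGraph_adj_outerEdge :
    ∀ a, petersen.lineGraph.Adj (outerEdge a) (outerEdge (a + 2)) := by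
  simp only [lineGraph_adj_iff_exists]
  decide

theorem lineGraph_adj_innerEdge :
    ∀ a, petersen.lineGraph.Adj (innerEdge a) (innerEdge (a + 1)) := by
  simp only [lineGraph_adj_iff_exists]
  decide

set_option synthInstance.maxSize 1000 in
theorem lineGraph_adj_spoke : ∀ a,
    petersen.lineGraph.Adj (spoke a) (outerEdge a) ∧
    petersen.lineGraph.Adj (spoke a) (outerEdge (a - 2)) ∧
    petersen.lineGraph.Adj (spoke a) (innerEdge a) ∧
    petersen.lineGraph.Adj (spoke a) (innerEdge (a - 1)) := by
  simp only [lineGraph_adj_iff_exists]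
  decide

set_option maxRecDepth 10000 in
theorem not_exists_spoke_colors :
    ∀ o : Fin 5 → Fin 3, (∀ a, o a ≠ o (a + 2)) → ∀ i : Fin 5 → Fin 3, (∀ a, i a ≠ i (a + 1)) →
      ¬ ∀ a, ∃ c, c ≠ o a ∧ c ≠ o (a - 2) ∧ c ≠ i a ∧ c ≠ i (a - 1) := by
  decide

theorem not_lineGraph_colorable_three : ¬ petersen.lineGraph.Colorable 3 := by
  rintro ⟨C⟩
  refine not_exists_spoke_colors (C ∘ outerEdge) (fun a => C.valid (lineGraph_adj_outerEdge a))
    (C ∘ innerEdge) (fun a => C.valid (lineGraph_adj_innerEdge a)) fun a => ⟨C (spoke a), ?_⟩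
  obtain ⟨h₁, h₂, h₃, h₄⟩ := lineGraph_adj_spoke a
  exact ⟨C.valid h₁, C.valid h₂, C.valid h₃, C.valid h₄⟩

end Petersen

theorem stmt_14 :
    ¬ ∃ M₁ M₂ M₃ : Set (Sym2 {s : Finset (Fin 5) // s.card = 2}),
      IsPerfectMatchingSet petersen M₁ ∧ IsPerfectMatchingSet petersen M₂ ∧
      IsPerfectMatchingSet petersen M₃ ∧
      Pairwise (Function.onFun Disjoint ![M₁, M₂, M₃]) ∧
      M₁ ∪ M₂ ∪ M₃ = petersen.edgeSet := by
  rintro ⟨M₁, M₂, M₃, h₁, h₂, h₃, -, hcover⟩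
  have hmatching : ∀ i, IsPerfectMatchingSet petersen (![M₁, M₂, M₃] i) := by
    intro i; fin_cases i <;> assumption
  have hcover_iUnion : petersen.edgeSet ⊆ ⋃ i, ![M₁, M₂, M₃] i := by
    rw [← hcover]
    rintro e ((he | he) | he)
    exacts [Set.mem_iUnion_of_mem 0 he, Set.mem_iUnion_of_mem 1 he, Set.mem_iUnion_of_mem 2 he]
  exact Petersen.not_lineGraph_colorable_three <| nonempty_lineGraph_coloring_of_matching_cover _
    (fun i => (hmatching i).subsingleton_incident) hcover_iUnion
end
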